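/- arXiv:2004.11568 — 3 statements merged into one kernel-verified Lean document; each statement's English description precedes it below -/
import Mathlib

section
/- For any n × n complex matrices (or operators on a finite-dimensional complex vector space) A_1, ..., A_n, the sum over all permutations σ of the ordered products satisfies the inclusion-exclusion identity: ∑_{σ ∈ S_n} A_{σ(1)} A_{σ(2)} ⋯ A_{σ(n)} = (-1)^n ∑_{S ⊆ {1,...,n}} (-1)^{|S|} (∑_{i ∈ S} A_i)^n. -/
/-!
Expanding `(∑ i ∈ s, A i) ^ m` without commuting the factors gives the sum of the ordered
products `A (f 0) ⋯ A (f (m-1))` over all words `f : Fin m → s`. Inclusion–exclusion over the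
letters a word misses isolates the words that use every letter, i.e. the surjective
`f : Fin n → Fin n`, which are exactly the permutations. The global sign `(-1) ^ n` appears when
the sum over the sets of missing letters is reindexed by their complements.
-/

open Finset Function

variable {ι R : Type*}

theorem sum_pow_eq_sum_piFinset_listProd [Semiring R] (s : Finset ι) (a : ι → R) :
    ∀ m : ℕ, (∑ i ∈ s, a i) ^ m =
      ∑ f ∈ Fintype.piFinset fun _ : Fin m => s, (List.ofFn fun k => a (f k)).prod
  | 0 => by simp
  | m + 1 => by
    rw [pow_succ', sum_pow_eq_sum_piFinset_listProd s a m, sum_mul_sum, ← sum_product']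
    refine sum_nbij' (fun p => Fin.cons p.1 p.2) (fun f => (f 0, Fin.tail f)) ?_ ?_ ?_ ?_ ?_
    all_goals simp [Fin.forall_fin_succ, List.ofFn_succ, Fin.tail]

variable [DecidableEq ι] [Fintype ι]

theorem neg_one_pow_card_compl {K : Type*} [Monoid K] [HasDistribNeg K] (s : Finset ι) :
    (-1 : K) ^ #sᶜ = (-1) ^ Fintype.card ι * (-1) ^ #s := by
  rw [← card_compl_add_card s, pow_add, mul_assoc, ← pow_add, ← two_mul, pow_mul, neg_one_sq,
    one_pow, mul_one]

theorem sum_perm_eq_sum_surjective {M : Type*} [AddCommMonoid M] (g : (ι → ι) → M) :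
    ∑ σ : Equiv.Perm ι, g σ = ∑ f : ι → ι with Surjective f, g f := by
  refine sum_bij (fun σ _ => σ) (fun σ _ => by simpa using σ.surjective)
    (fun _ _ _ _ h => DFunLike.coe_injective h) (fun f hf => ?_) (fun _ _ => rfl)
  replace hf : Surjective f := by simpa using hf
  exact ⟨Equiv.ofBijective f ⟨Finite.injective_iff_surjective.mpr hf, hf⟩, mem_univ _, rfl⟩

theorem sum_surjective_listProd_inclusion_exclusion [Ring R] (a : ι → R) (m : ℕ) :
    ∑ f : Fin m → ι with Surjective f, (List.ofFn fun k => a (f k)).prod =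
      ∑ t : Finset ι, (-1 : ℤ) ^ #t • (∑ i ∈ tᶜ, a i) ^ m := by
  set missing : ι → Finset (Fin m → ι) := fun i => Fintype.piFinset fun _ => {i}ᶜ
  have hsurj : (univ.inf fun i => (missing i)ᶜ) = ({f | Surjective f} : Finset (Fin m → ι)) := by
    ext f
    rw [mem_filter]
    simp [missing, Surjective, mem_inf]
  have hmissing (t : Finset ι) : t.inf missing = Fintype.piFinset fun _ => tᶜ := by
    ext f
    simp only [missing, mem_inf, Fintype.mem_piFinset, mem_compl, mem_singleton]
    grind
  have := inclusion_exclusion_sum_inf_compl univ missing fun f => (List.ofFn fun k => a (f k)).prod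
  simpa only [hsurj, hmissing, ← sum_pow_eq_sum_piFinset_listProd, powerset_univ] using this

theorem sum_surjective_listProd_ryser [Ring R] (a : ι → R) (m : ℕ) :
    ∑ f : Fin m → ι with Surjective f, (List.ofFn fun k => a (f k)).prod =
      (-1 : ℤ) ^ Fintype.card ι • ∑ s : Finset ι, (-1 : ℤ) ^ #s • (∑ i ∈ s, a i) ^ m := by
  rw [sum_surjective_listProd_inclusion_exclusion, smul_sum]
  refine Fintype.sum_bijective compl compl_involutive.bijective _ _ fun t => ?_
  rw [smul_smul, ← neg_one_pow_card_compl, compl_compl]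

/-- Ryser-type inclusion-exclusion formula for the permanent-like sum of ordered
products of (not necessarily commuting) operators. -/
theorem ryser_operator_formula (n D : ℕ) (A : Fin n → Matrix (Fin D) (Fin D) ℂ) :
    ∑ σ : Equiv.Perm (Fin n), (List.ofFn (fun i => A (σ i))).prod =
      ((-1 : ℂ) ^ n) • ∑ S : Finset (Fin n),
        ((-1 : ℂ) ^ S.card) • (∑ i ∈ S, A i) ^ n := by
  rw [sum_perm_eq_sum_surjective (fun f => (List.ofFn fun i => A (f i)).prod),
    sum_surjective_listProd_ryser, Fintype.card_fin]
  simp only [← Int.cast_smul_eq_zsmul ℂ, Int.cast_pow, Int.cast_neg, Int.cast_one]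
end

section
/- Let G be a graph with maximum degree at most Δ ≥ 1 and let x be a vertex of G. For every n ≥ 1, the number of connected subgraphs of G with exactly n edges that contain the vertex x is at most (eΔ)^n / 2. -/
/-!
Explore a connected edge set `A ∋ x` from `x` with a queue of darts, initially the darts
leaving `x`. The head dart is accepted when its edge is a new edge of `A`; accepting a dart
that reaches a new vertex `v` enqueues the other darts leaving `v`, at most `Δ - 1` of them.
So the `n = |A|` accepts happen among the first `Δ + (n - 1)(Δ - 1) ≤ nΔ` steps, and since
the process sees `A` only through the accept/reject answers, `A` is recovered from the set of
accepting times, an `n`-subset of `{0, …, nΔ - 1}`. Finally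
`C(nΔ, n) ≤ (nΔ)ⁿ / n! ≤ (eΔ)ⁿ / √(2πn)` by Stirling.
-/

open Finset

noncomputable section

theorem Nat.choose_mul_le_exp_one_mul_pow_div_two {n : ℕ} (hn : n ≠ 0) (Δ : ℕ) :
    ((n * Δ).choose n : ℝ) ≤ (Real.exp 1 * Δ) ^ n / 2 := by
  have hstirling : 2 * (n / Real.exp 1) ^ n ≤ (n.factorial : ℝ) := by
    refine le_trans (mul_le_mul_of_nonneg_right ?_ (by positivity))
      (Stirling.le_factorial_stirling n)
    have : (1 : ℝ) ≤ n := by exact_mod_cast Nat.one_le_iff_ne_zero.2 hn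
    rw [Real.le_sqrt (by norm_num) (by positivity)]
    nlinarith [Real.pi_gt_three]
  have : (n : ℝ) ≠ 0 := by exact_mod_cast hn
  calc ((n * Δ).choose n : ℝ) ≤ ((n * Δ : ℕ) : ℝ) ^ n / n.factorial :=
        Nat.choose_le_pow_div n (n * Δ)
    _ ≤ ((n * Δ : ℕ) : ℝ) ^ n / (2 * (n / Real.exp 1) ^ n) := by gcongr
    _ = (Real.exp 1 * Δ) ^ n / 2 := by
      rw [div_pow, Nat.cast_mul, mul_pow, mul_pow]
      field_simp

namespace SimpleGraph

variable {V : Type*} {G : SimpleGraph V}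

theorem Subgraph.Connected.verts_subset_of_adj_closed {H : G.Subgraph} (hH : H.Connected)
    {x : V} (hx : x ∈ H.verts) {S : Set V} (hxS : x ∈ S)
    (hS : ∀ ⦃a b⦄, a ∈ S → H.Adj a b → b ∈ S) : H.verts ⊆ S := by
  intro v hv
  obtain ⟨p⟩ := hH.preconnected ⟨x, hx⟩ ⟨v, hv⟩
  suffices ∀ {a b : H.verts}, H.coe.Walk a b → a.1 ∈ S → b.1 ∈ S from this p hxS
  intro a b p
  induction p with
  | nil => exact id
  | cons hadj _ ih => exact fun ha => ih (hS ha hadj)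

theorem Subgraph.ext_of_edgeSet_eq {H H' : G.Subgraph} (hH : H.verts = H.support)
    (hH' : H'.verts = H'.support) (h : H.edgeSet = H'.edgeSet) : H = H' := by
  have hadj : H.Adj = H'.Adj := by
    ext a b
    rw [← Subgraph.mem_edgeSet, h, Subgraph.mem_edgeSet]
  exact Subgraph.ext (by rw [hH, hH']; ext v; simp only [Subgraph.mem_support, hadj]) hadj

theorem Dart.mem_of_mem_cons_of_edge_ne {d e : G.Dart} {Q : List G.Dart} (he : e ∈ d :: Q)
    (hne : e.edge ≠ d.edge) : e ∈ Q :=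
  (List.mem_cons.1 he).resolve_left (by rintro rfl; exact hne rfl)

variable (G) in
structure Exploration where
  queue : List G.Dart
  found : Finset (Sym2 V)

namespace Exploration

variable [Fintype V] [DecidableEq V]

section

variable (x : V) (A : Set (Sym2 V))

def reached (F : Finset (Sym2 V)) : Finset V := insert x ({v | ∃ e ∈ F, v ∈ e} : Finset V)

def Covers (σ : G.Exploration) : Prop :=
  ∀ d : G.Dart, d.fst ∈ reached x σ.found → d.edge ∈ A →
    d.edge ∈ σ.found ∨ d ∈ σ.queue ∨ d.symm ∈ σ.queue

end

variable {x : V} {A : Set (Sym2 V)}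

theorem mem_reached_insert {v : V} {e : Sym2 V} {F : Finset (Sym2 V)} :
    v ∈ reached x (insert e F) ↔ v ∈ reached x F ∨ v ∈ e := by
  simp only [reached, mem_insert, mem_filter, mem_univ, true_and, exists_eq_or_imp]
  grind

theorem mem_reached_of_mem {v : V} {e : Sym2 V} {F : Finset (Sym2 V)} (he : e ∈ F)
    (hv : v ∈ e) : v ∈ reached x F :=
  mem_insert_of_mem (mem_filter.2 ⟨mem_univ _, e, he, hv⟩)

theorem coe_found_eq_of_covers {H : G.Subgraph} (hH : H.Connected) (hx : x ∈ H.verts)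
    {σ : G.Exploration} (hsub : ↑σ.found ⊆ H.edgeSet) (hcov : Covers x H.edgeSet σ)
    (hq : σ.queue = []) : ↑σ.found = H.edgeSet := by
  have hclosed : ∀ ⦃a b⦄, a ∈ reached x σ.found → H.Adj a b → s(a, b) ∈ σ.found :=
    fun a b ha hab => by simpa [hq] using hcov ⟨(a, b), hab.adj_sub⟩ ha hab
  have hverts : H.verts ⊆ ↑(reached x σ.found) :=
    hH.verts_subset_of_adj_closed hx (mem_insert_self _ _)
      fun a b ha hab => mem_reached_of_mem (hclosed ha hab) (Sym2.mem_mk_right a b)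
  refine hsub.antisymm fun e he => ?_
  induction e using Sym2.ind with
  | h a b => exact hclosed (hverts (Subgraph.mem_edgeSet.1 he).fst_mem) he

end Exploration

variable [Fintype V] [DecidableEq V] [DecidableRel G.Adj]

variable (G) in
def outDarts (v : V) : Finset G.Dart := {d | d.fst = v}

namespace Exploration

section

variable (x : V) (A : Set (Sym2 V))

def newDarts (F : Finset (Sym2 V)) (d : G.Dart) : List G.Dart :=
  if d.snd ∈ reached x F then [] else ((G.outDarts d.snd).erase d.symm).toList

/-- `step` sees the explored edge set only through the bit `b`, so a run is determined by the
sequence of bits it receives. -/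
def step (σ : G.Exploration) (b : Bool) : G.Exploration :=
  match σ.queue, b with
  | [], _ => σ
  | _ :: Q, false => ⟨Q, σ.found⟩
  | d :: Q, true => ⟨Q ++ newDarts x σ.found d, insert d.edge σ.found⟩

open Classical in
def query (σ : G.Exploration) : Bool :=
  match σ.queue with
  | [] => false
  | d :: _ => decide (d.edge ∈ A ∧ d.edge ∉ σ.found)

def next (σ : G.Exploration) : G.Exploration := σ.step x (σ.query A)

end

variable {x : V} {A : Set (Sym2 V)}

theorem mem_newDarts {F : Finset (Sym2 V)} {d e : G.Dart} :
    e ∈ newDarts x F d ↔ d.snd ∉ reached x F ∧ e.fst = d.snd ∧ e ≠ d.symm := by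
  unfold newDarts
  split_ifs with h <;> simp [h, outDarts, and_comm]

theorem length_newDarts_le {Δ : ℕ} (hdeg : ∀ v, G.degree v ≤ Δ) (F : Finset (Sym2 V))
    (d : G.Dart) : (newDarts x F d).length ≤ Δ - 1 := by
  unfold newDarts
  split_ifs
  · exact Nat.zero_le _
  · rw [length_toList, card_erase_of_mem (by simp [outDarts]), outDarts,
      dart_fst_fiber_card_eq_degree]
    exact Nat.sub_le_sub_right (hdeg _) 1

@[simp] theorem next_nil (F : Finset (Sym2 V)) : next x A (⟨[], F⟩ : G.Exploration) = ⟨[], F⟩ :=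
  rfl

theorem next_cons_pos {d : G.Dart} {Q : List G.Dart} {F : Finset (Sym2 V)}
    (h : d.edge ∈ A ∧ d.edge ∉ F) :
    next x A ⟨d :: Q, F⟩ = ⟨Q ++ newDarts x F d, insert d.edge F⟩ := by
  simp [next, query, step, h]

theorem next_cons_neg {d : G.Dart} {Q : List G.Dart} {F : Finset (Sym2 V)}
    (h : ¬(d.edge ∈ A ∧ d.edge ∉ F)) : next x A ⟨d :: Q, F⟩ = ⟨Q, F⟩ := by
  have hq : query A (⟨d :: Q, F⟩ : G.Exploration) = false := by simpa [query] using h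
  simp only [next, hq, step]

theorem queue_next_eq_nil {σ : G.Exploration} (h : σ.queue = []) : (next x A σ).queue = [] := by
  rcases σ with ⟨_ | _, F⟩
  · rfl
  · simp at h

theorem card_found_next (σ : G.Exploration) :
    (next x A σ).found.card = σ.found.card + if σ.query A then 1 else 0 := by
  rcases σ with ⟨_ | ⟨d, Q⟩, F⟩
  · simp [query]
  by_cases h : d.edge ∈ A ∧ d.edge ∉ F
  · simp [next_cons_pos h, query, h, card_insert_of_notMem h.2]
  · simp [next_cons_neg h, query, h]

theorem found_next_subset {σ : G.Exploration} (hσ : ↑σ.found ⊆ A) :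
    ↑(next x A σ).found ⊆ A := by
  rcases σ with ⟨_ | ⟨d, Q⟩, F⟩
  · simpa using hσ
  by_cases h : d.edge ∈ A ∧ d.edge ∉ F
  · simpa [next_cons_pos h, Set.insert_subset_iff] using ⟨h.1, hσ⟩
  · simpa [next_cons_neg h] using hσ

theorem fst_mem_reached_next {σ : G.Exploration}
    (hσ : ∀ d ∈ σ.queue, d.fst ∈ reached x σ.found) :
    ∀ d ∈ (next x A σ).queue, d.fst ∈ reached x (next x A σ).found := by
  rcases σ with ⟨_ | ⟨d, Q⟩, F⟩
  · simp
  simp only [List.mem_cons, forall_eq_or_imp] at hσ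
  by_cases h : d.edge ∈ A ∧ d.edge ∉ F
  · rw [next_cons_pos h]
    intro e he
    rw [mem_reached_insert]
    rcases List.mem_append.1 he with he | he
    · exact Or.inl (hσ.2 e he)
    · rw [(mem_newDarts.1 he).2.1]
      exact Or.inr (Sym2.mem_mk_right _ _)
  · rw [next_cons_neg h]
    exact hσ.2

theorem covers_next {σ : G.Exploration} (hfst : ∀ d ∈ σ.queue, d.fst ∈ reached x σ.found)
    (hσ : Covers x A σ) : Covers x A (next x A σ) := by
  rcases σ with ⟨_ | ⟨d, Q⟩, F⟩
  · simpa using hσ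
  intro e he heA
  have hold (hr : e.fst ∈ reached x F) (hed : e.edge ≠ d.edge) :
      e.edge ∈ F ∨ e ∈ Q ∨ e.symm ∈ Q :=
    (hσ e hr heA).imp_right <| Or.imp (Dart.mem_of_mem_cons_of_edge_ne · hed)
      (Dart.mem_of_mem_cons_of_edge_ne · (by rwa [Dart.edge_symm]))
  by_cases h : d.edge ∈ A ∧ d.edge ∉ F
  · rw [next_cons_pos h] at he ⊢
    by_cases hed : e.edge = d.edge
    · exact Or.inl (hed ▸ mem_insert_self _ _)
    by_cases hr : e.fst ∈ reached x F
    · exact (hold hr hed).imp mem_insert_of_mem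
        (Or.imp (List.mem_append_left _) (List.mem_append_left _))
    have hsnd : e.fst = d.snd := by
      rcases Sym2.mem_iff.1 (mem_reached_insert.1 he |>.resolve_left hr) with h' | h'
      · exact absurd (h' ▸ hfst d (List.mem_cons_self ..)) hr
      · exact h'
    refine Or.inr (Or.inl (List.mem_append_right _ (mem_newDarts.2 ⟨hsnd ▸ hr, hsnd, ?_⟩)))
    rintro rfl
    exact hed d.edge_symm
  · rw [next_cons_neg h] at he ⊢
    by_cases hed : e.edge = d.edge
    · exact Or.inl (hed ▸ not_and_not_right.1 h (hed ▸ heA))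
    · exact hold he hed

theorem length_queue_next_add_le {Δ : ℕ} (hdeg : ∀ v, G.degree v ≤ Δ) {σ : G.Exploration}
    (hσ : σ.queue ≠ []) :
    (next x A σ).queue.length + 1 + σ.found.card * (Δ - 1) ≤
      σ.queue.length + (next x A σ).found.card * (Δ - 1) := by
  rcases σ with ⟨_ | ⟨d, Q⟩, F⟩
  · exact absurd rfl hσ
  by_cases h : d.edge ∈ A ∧ d.edge ∉ F
  · have := length_newDarts_le (x := x) hdeg F d
    simp only [next_cons_pos h, List.length_append, List.length_cons,
      card_insert_of_notMem h.2]
    nlinarith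
  · simp [next_cons_neg h]

end Exploration

open Exploration

variable {x : V} {A : Set (Sym2 V)}

variable (G) in
def explore (x : V) (A : Set (Sym2 V)) (t : ℕ) : G.Exploration :=
  (next x A)^[t] ⟨(G.outDarts x).toList, ∅⟩

variable (G) in
def exploreCode (x : V) (A : Set (Sym2 V)) (T : ℕ) : Finset ℕ :=
  {t ∈ range T | (G.explore x A t).query A}

theorem explore_zero : G.explore x A 0 = ⟨(G.outDarts x).toList, ∅⟩ := rfl

theorem explore_succ (t : ℕ) : G.explore x A (t + 1) = next x A (G.explore x A t) :=
  Function.iterate_succ_apply' ..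

theorem found_explore_subset (t : ℕ) : ↑(G.explore x A t).found ⊆ A := by
  induction t with
  | zero => simp [explore_zero]
  | succ t ih => rw [explore_succ]; exact found_next_subset ih

theorem fst_mem_reached_explore (t : ℕ) :
    ∀ d ∈ (G.explore x A t).queue, d.fst ∈ reached x (G.explore x A t).found := by
  induction t with
  | zero => simp [explore_zero, outDarts, reached]
  | succ t ih => rw [explore_succ]; exact fst_mem_reached_next ih

theorem covers_explore (t : ℕ) : Covers x A (G.explore x A t) := by
  induction t with
  | zero =>
    intro d hd _
    simp_all [explore_zero, outDarts, reached]
  | succ t ih => rw [explore_succ]; exact covers_next (fst_mem_reached_explore t) ih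

theorem length_queue_explore_add_le {Δ : ℕ} (hdeg : ∀ v, G.degree v ≤ Δ) (t : ℕ)
    (ht : (G.explore x A t).queue ≠ []) :
    (G.explore x A t).queue.length + t ≤ Δ + (G.explore x A t).found.card * (Δ - 1) := by
  induction t with
  | zero => simpa [explore_zero, outDarts, dart_fst_fiber_card_eq_degree] using hdeg x
  | succ t ih =>
    rw [explore_succ] at ht ⊢
    have hne : (G.explore x A t).queue ≠ [] := mt queue_next_eq_nil ht
    have := length_queue_next_add_le (A := A) (x := x) hdeg hne
    have := ih hne
    omega

theorem coe_found_explore_eq {H : G.Subgraph} (hH : H.Connected) (hx : x ∈ H.verts) {Δ : ℕ}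
    (hdeg : ∀ v, G.degree v ≤ Δ) :
    ↑(G.explore x H.edgeSet (H.edgeSet.ncard * Δ)).found = H.edgeSet := by
  generalize hn : H.edgeSet.ncard = n
  by_cases hq : (G.explore x H.edgeSet (n * Δ)).queue = []
  · exact coe_found_eq_of_covers hH hx (found_explore_subset _) (covers_explore _) hq
  refine Set.eq_of_subset_of_ncard_le (found_explore_subset _) ?_
  rw [Set.ncard_coe_finset, hn]
  by_contra! hlt
  have hlen := length_queue_explore_add_le hdeg _ hq
  have hpos := List.length_pos_iff.2 hq
  have hfound : (G.explore x H.edgeSet (n * Δ)).found.card * (Δ - 1) ≤ (n - 1) * (Δ - 1) :=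
    Nat.mul_le_mul_right _ (by omega)
  have hbudget : Δ + (n - 1) * (Δ - 1) ≤ n * Δ := by
    obtain ⟨m, rfl⟩ : ∃ m, n = m + 1 := ⟨n - 1, by omega⟩
    rcases Δ with _ | Δ
    · simp
    · simp only [Nat.add_sub_cancel]
      nlinarith
  omega

theorem card_exploreCode (T : ℕ) :
    (G.exploreCode x A T).card = (G.explore x A T).found.card := by
  induction T with
  | zero => rfl
  | succ T ih =>
    rw [exploreCode, range_add_one, filter_insert, explore_succ, card_found_next, ← ih]
    split_ifs
    · rw [card_insert_of_notMem (by simp), exploreCode]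
    · rfl

theorem explore_eq_of_exploreCode_eq {A' : Set (Sym2 V)} {T : ℕ}
    (h : G.exploreCode x A T = G.exploreCode x A' T) : G.explore x A T = G.explore x A' T := by
  suffices ∀ t ≤ T, G.explore x A t = G.explore x A' t from this T le_rfl
  intro t ht
  induction t with
  | zero => rfl
  | succ t ih =>
    have hq : (G.explore x A t).query A = (G.explore x A' t).query A' :=
      Bool.eq_iff_iff.2 (by simpa [exploreCode, show t < T by omega] using congrArg (t ∈ ·) h)
    rw [explore_succ, explore_succ, next, next, hq, ih (by omega)]

theorem card_exploreCode_eq_ncard {H : G.Subgraph} (hH : H.Connected) (hx : x ∈ H.verts) {Δ : ℕ}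
    (hdeg : ∀ v, G.degree v ≤ Δ) :
    (G.exploreCode x H.edgeSet (H.edgeSet.ncard * Δ)).card = H.edgeSet.ncard := by
  rw [card_exploreCode, ← Set.ncard_coe_finset, coe_found_explore_eq hH hx hdeg]

theorem edgeSet_eq_of_exploreCode_eq {H H' : G.Subgraph} (hH : H.Connected) (hH' : H'.Connected)
    (hx : x ∈ H.verts) (hx' : x ∈ H'.verts) {n Δ : ℕ} (hn : H.edgeSet.ncard = n)
    (hn' : H'.edgeSet.ncard = n) (hdeg : ∀ v, G.degree v ≤ Δ)
    (h : G.exploreCode x H.edgeSet (n * Δ) = G.exploreCode x H'.edgeSet (n * Δ)) :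
    H.edgeSet = H'.edgeSet := by
  rw [← coe_found_explore_eq hH hx hdeg, ← coe_found_explore_eq hH' hx' hdeg, hn, hn',
    explore_eq_of_exploreCode_eq h]

end SimpleGraph

end

open SimpleGraph Finset in
theorem card_connected_subgraphs_le_general (V : Type*) [Fintype V] (G : SimpleGraph V)
    [DecidableRel G.Adj] (Δ : ℕ) (hdeg : ∀ v, G.degree v ≤ Δ)
    (x : V) (n : ℕ) (hn : 1 ≤ n) :
    ({H : G.Subgraph | H.Connected ∧ x ∈ H.verts ∧ H.edgeSet.ncard = n ∧
        H.verts = H.support}.ncard : ℝ) ≤ (Real.exp 1 * Δ) ^ n / 2 := by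
  classical
  set S := {H : G.Subgraph | H.Connected ∧ x ∈ H.verts ∧ H.edgeSet.ncard = n ∧
    H.verts = H.support}
  have hmaps : ∀ H ∈ S, G.exploreCode x H.edgeSet (n * Δ) ∈
      (((range (n * Δ)).powersetCard n : Finset (Finset ℕ)) : Set (Finset ℕ)) := by
    rintro H ⟨hH, hx, rfl, -⟩
    exact mem_powersetCard.2 ⟨filter_subset _ _, card_exploreCode_eq_ncard hH hx hdeg⟩
  have hinj : Set.InjOn (fun H : G.Subgraph => G.exploreCode x H.edgeSet (n * Δ)) S :=
    fun H ⟨hH, hx, hn, hsupp⟩ H' ⟨hH', hx', hn', hsupp'⟩ h =>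
      Subgraph.ext_of_edgeSet_eq hsupp hsupp'
        (edgeSet_eq_of_exploreCode_eq hH hH' hx hx' hn hn' hdeg h)
  calc (S.ncard : ℝ) ≤ ((n * Δ).choose n : ℕ) := by
        have := Set.ncard_le_ncard_of_injOn _ hmaps hinj
        rwa [Set.ncard_coe_finset, card_powersetCard, card_range, ← Nat.cast_le (α := ℝ)] at this
    _ ≤ (Real.exp 1 * Δ) ^ n / 2 := Nat.choose_mul_le_exp_one_mul_pow_div_two (by omega) Δ

/-- Borgs–Chayes–Kahn–Lovász: in a graph of maximum degree at most Δ, the number of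
connected subgraphs with exactly n edges (counted by their edge sets, i.e. subgraphs
without isolated vertices) containing a fixed vertex x is at most (eΔ)^n / 2. -/
theorem card_connected_subgraphs_le (V : Type*) [Fintype V] (G : SimpleGraph V)
    [DecidableRel G.Adj] (Δ : ℕ) (hΔ : 1 ≤ Δ) (hdeg : ∀ v, G.degree v ≤ Δ)
    (x : V) (n : ℕ) (hn : 1 ≤ n) :
    ({H : G.Subgraph | H.Connected ∧ x ∈ H.verts ∧ H.edgeSet.ncard = n ∧
        H.verts = H.support}.ncard : ℝ) ≤ (Real.exp 1 * Δ) ^ n / 2 :=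
  card_connected_subgraphs_le_general V G Δ hdeg x n hn
end

section
/- Let (C, w, ∼) be a finite abstract polymer model and suppose there exists a function a : C → ℝ≥0 such that for every polymer γ, ∑_{γ* ≁ γ} |w_{γ*}| e^{a(γ*)} ≤ a(γ). Then the polymer partition function Z(C, w) = ∑_{Γ admissible} ∏_{γ ∈ Γ} w_γ is nonzero. -/
open scoped Classical

noncomputable def KPZ {C : Type*} [Fintype C] (w : C → ℂ) (compat : C → C → Prop)
    (S : Finset C) : ℂ :=
  ∑ Γ ∈ S.powerset.filter (fun Γ => ∀ γ ∈ Γ, ∀ γ' ∈ Γ, γ ≠ γ' → compat γ γ'),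
    ∏ γ ∈ Γ, w γ

lemma KPZ_empty {C : Type*} [Fintype C] (w : C → ℂ) (compat : C → C → Prop) :
    KPZ w compat ∅ = 1 := by
  rw [KPZ]
  rw [Finset.powerset_empty]
  rw [Finset.filter_singleton]
  simp

lemma KPZ_erase {C : Type*} [Fintype C] (w : C → ℂ) (compat : C → C → Prop)
    (hsym : Symmetric compat) (hrefl : ∀ γ, ¬ compat γ γ)
    (S : Finset C) (γ : C) (hγ : γ ∈ S) :
    KPZ w compat S = KPZ w compat (S.erase γ)
      + w γ * KPZ w compat (S.filter (fun γ' => compat γ' γ)) := by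
  classical
  set P : Finset C → Prop := fun Γ => ∀ γ ∈ Γ, ∀ γ' ∈ Γ, γ ≠ γ' → compat γ γ' with hP
  have hsplit := Finset.sum_filter_add_sum_filter_not
    (S.powerset.filter P) (fun Γ => γ ∈ Γ) (fun Γ => ∏ x ∈ Γ, w x)
  rw [KPZ, ← hsplit]
  have h1 : (S.powerset.filter P).filter (fun Γ => ¬ γ ∈ Γ)
      = (S.erase γ).powerset.filter P := by
    ext Γ
    simp only [Finset.mem_filter, Finset.mem_powerset, Finset.subset_erase]
    tauto
  have h2 : ∑ Γ ∈ (S.powerset.filter P).filter (fun Γ => γ ∈ Γ), ∏ x ∈ Γ, w x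
      = w γ * KPZ w compat (S.filter (fun γ' => compat γ' γ)) := by
    rw [KPZ, Finset.mul_sum]
    refine Finset.sum_bij' (fun Γ _ => Γ.erase γ) (fun Γ _ => insert γ Γ) ?_ ?_ ?_ ?_ ?_
    · intro Γ hΓ
      simp only [Finset.mem_filter, Finset.mem_powerset] at hΓ ⊢
      obtain ⟨⟨hΓS, hadm⟩, hγΓ⟩ := hΓ
      refine ⟨?_, ?_⟩
      · intro x hx
        have hxΓ := Finset.mem_of_mem_erase hx
        have hxne := Finset.ne_of_mem_erase hx
        simp only [Finset.mem_filter]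
        exact ⟨hΓS hxΓ, hadm x hxΓ γ hγΓ hxne⟩
      · intro x hx y hy hxy
        exact hadm x (Finset.mem_of_mem_erase hx) y (Finset.mem_of_mem_erase hy) hxy
    · intro Γ hΓ
      simp only [Finset.mem_filter, Finset.mem_powerset] at hΓ ⊢
      obtain ⟨hΓS, hadm⟩ := hΓ
      refine ⟨⟨?_, ?_⟩, Finset.mem_insert_self γ Γ⟩
      · intro x hx
        by_cases hxγ : x = γ
        · exact hxγ ▸ hγ
        · have hxΓ : x ∈ Γ := by
            rcases Finset.mem_insert.mp hx with h | h
            · exact absurd h hxγ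
            · exact h
          exact (Finset.mem_filter.mp (hΓS hxΓ)).1
      · intro x hx y hy hxy
        by_cases hxγ : x = γ
        · by_cases hyγ : y = γ
          · exact absurd (hxγ.trans hyγ.symm) hxy
          · have hyΓ : y ∈ Γ := by
              rcases Finset.mem_insert.mp hy with h | h
              · exact absurd h hyγ
              · exact h
            subst hxγ
            exact hsym ((Finset.mem_filter.mp (hΓS hyΓ)).2)
        · have hxΓ : x ∈ Γ := by
            rcases Finset.mem_insert.mp hx with h | h
            · exact absurd h hxγ
            · exact h
          by_cases hyγ : y = γ
          · subst hyγ
            exact (Finset.mem_filter.mp (hΓS hxΓ)).2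
          · have hyΓ : y ∈ Γ := by
              rcases Finset.mem_insert.mp hy with h | h
              · exact absurd h hyγ
              · exact h
            exact hadm x hxΓ y hyΓ hxy
    · intro Γ hΓ
      simp only [Finset.mem_filter, Finset.mem_powerset] at hΓ
      exact Finset.insert_erase hΓ.2
    · intro Γ hΓ
      simp only [Finset.mem_filter, Finset.mem_powerset] at hΓ
      have : γ ∉ Γ := by
        intro hmem
        exact hrefl γ ((Finset.mem_filter.mp (hΓ.1 hmem)).2)
      exact Finset.erase_insert this
    · intro Γ hΓ
      simp only [Finset.mem_filter, Finset.mem_powerset] at hΓ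
      exact (Finset.mul_prod_erase Γ w hΓ.2).symm
  rw [h1, h2, add_comm]
  rfl

lemma KP_main {C : Type*} [Fintype C]
    (w : C → ℂ) (compat : C → C → Prop) (hsym : Symmetric compat)
    (hrefl : ∀ γ, ¬ compat γ γ) (a : C → ℝ) (ha : ∀ γ, 0 ≤ a γ)
    (hKP : ∀ γ : C,
      ∑ γ' ∈ Finset.univ.filter (fun γ' => ¬ compat γ' γ),
        ‖w γ'‖ * Real.exp (a γ') ≤ a γ) :
    ∀ n : ℕ, ∀ S : Finset C, S.card ≤ n →
      KPZ w compat S ≠ 0 ∧ ∀ γ ∈ S,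
        ‖KPZ w compat (S.erase γ)‖
          ≤ Real.exp (‖w γ‖ * Real.exp (a γ))
            * ‖KPZ w compat S‖ := by
  classical
  set b : C → ℝ := fun x => ‖w x‖ * Real.exp (a x) with hb
  have hb0 : ∀ x, 0 ≤ b x := fun x =>
    mul_nonneg (norm_nonneg _) (Real.exp_pos _).le
  intro n
  induction n with
  | zero =>
    intro S hS
    have : S = ∅ := Finset.card_eq_zero.mp (Nat.le_zero.mp hS)
    subst this
    constructor
    · rw [KPZ_empty]; exact one_ne_zero
    · intro γ hγ; exact absurd hγ (Finset.notMem_empty γ)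
  | succ n IH =>
    intro S hS
    -- telescoping lemma at level n
    have tele : ∀ F T : Finset C, F ⊆ T → T.card ≤ n →
        ‖KPZ w compat (T \ F)‖
          ≤ Real.exp (∑ x ∈ F, b x) * ‖KPZ w compat T‖ := by
      intro F
      induction F using Finset.induction_on with
      | empty =>
        intro T _ _
        simp
      | insert x F hx hFI =>
        intro T hsub hT
        have hxT : x ∈ T := hsub (Finset.mem_insert_self x F)
        have hFT : F ⊆ T := fun y hy => hsub (Finset.mem_insert_of_mem hy)
        have h1 : T \ insert x F = (T \ F).erase x := Finset.sdiff_insert T F x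
        have hxTF : x ∈ T \ F := Finset.mem_sdiff.mpr ⟨hxT, hx⟩
        have hcard : (T \ F).card ≤ n := le_trans (Finset.card_le_card (Finset.sdiff_subset)) hT
        have h2 := (IH (T \ F) hcard).2 x hxTF
        have h3 := hFI T hFT hT
        rw [h1]
        calc ‖KPZ w compat ((T \ F).erase x)‖
            ≤ Real.exp (b x) * ‖KPZ w compat (T \ F)‖ := h2
          _ ≤ Real.exp (b x) * (Real.exp (∑ y ∈ F, b y) * ‖KPZ w compat T‖) := by
              exact mul_le_mul_of_nonneg_left h3 (Real.exp_pos _).le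
          _ = Real.exp (∑ y ∈ insert x F, b y) * ‖KPZ w compat T‖ := by
              rw [Finset.sum_insert hx, Real.exp_add]; ring
    by_cases hc : S.card ≤ n
    · exact IH S hc
    · have hcard : S.card = n + 1 := le_antisymm hS (not_le.mp hc)
      have hne : S.Nonempty := Finset.card_pos.mp (by omega)
      -- main claim for each γ ∈ S
      have key : ∀ γ ∈ S, KPZ w compat S ≠ 0 ∧
          ‖KPZ w compat (S.erase γ)‖
            ≤ Real.exp (b γ) * ‖KPZ w compat S‖ := by
        intro γ hγ
        set T := S.erase γ with hT
        have hTcard : T.card = n := by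
          rw [hT, Finset.card_erase_of_mem hγ, hcard]
          omega
        set S' := S.filter (fun γ' => compat γ' γ) with hS'
        have hS'T : S' ⊆ T := by
          intro x hx
          rw [hS', Finset.mem_filter] at hx
          refine Finset.mem_erase.mpr ⟨?_, hx.1⟩
          intro hxeq
          exact hrefl γ (hxeq ▸ hx.2)
        set F := T \ S' with hF
        have hTF : T \ F = S' := by
          rw [hF, Finset.sdiff_sdiff_self_left, Finset.inter_eq_right.mpr hS'T]
        have htele := tele F T (Finset.sdiff_subset) (le_of_eq hTcard)
        rw [hTF] at htele
        -- bound the sum over F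
        have hFsub : F ⊆ (Finset.univ.filter (fun γ' => ¬ compat γ' γ)).erase γ := by
          intro x hx
          rw [hF, Finset.mem_sdiff, hT, Finset.mem_erase] at hx
          obtain ⟨⟨hxne, hxS⟩, hxS'⟩ := hx
          refine Finset.mem_erase.mpr ⟨hxne, Finset.mem_filter.mpr ⟨Finset.mem_univ _, ?_⟩⟩
          intro hcomp
          exact hxS' (Finset.mem_filter.mpr ⟨hxS, hcomp⟩)
        have hγN : γ ∈ Finset.univ.filter (fun γ' => ¬ compat γ' γ) :=
          Finset.mem_filter.mpr ⟨Finset.mem_univ _, hrefl γ⟩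
        have hsumN : b γ + ∑ x ∈ (Finset.univ.filter (fun γ' => ¬ compat γ' γ)).erase γ, b x
            = ∑ x ∈ Finset.univ.filter (fun γ' => ¬ compat γ' γ), b x :=
          Finset.add_sum_erase _ b hγN
        have hsumF : ∑ x ∈ F, b x ≤ a γ - b γ := by
          have h1 : ∑ x ∈ F, b x
              ≤ ∑ x ∈ (Finset.univ.filter (fun γ' => ¬ compat γ' γ)).erase γ, b x :=
            Finset.sum_le_sum_of_subset_of_nonneg hFsub (fun x _ _ => hb0 x)
          have h2 := hKP γ
          rw [hb]
          linarith [h1, h2, hsumN]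
        have habs' : ‖KPZ w compat S'‖
            ≤ Real.exp (a γ - b γ) * ‖KPZ w compat T‖ :=
          le_trans htele (mul_le_mul_of_nonneg_right (Real.exp_le_exp.mpr hsumF)
            (norm_nonneg _))
        -- the key identity
        have hid := KPZ_erase w compat hsym hrefl S γ hγ
        set A := ‖KPZ w compat T‖ with hA
        set Zs := ‖KPZ w compat S‖ with hZs
        have hA0 : 0 ≤ A := norm_nonneg _
        have hZs0 : 0 ≤ Zs := norm_nonneg _
        have hZT : KPZ w compat T = KPZ w compat S - w γ * KPZ w compat S' := by
          rw [hid]; ring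
        have hA_le : A ≤ Zs + ‖w γ‖ * ‖KPZ w compat S'‖ := by
          rw [hA, hZT]
          calc ‖KPZ w compat S - w γ * KPZ w compat S'‖
              ≤ ‖KPZ w compat S‖ + ‖w γ * KPZ w compat S'‖ :=
                norm_sub_le _ _
            _ = Zs + ‖w γ‖ * ‖KPZ w compat S'‖ := by
                rw [norm_mul]
        have hwbound : ‖w γ‖ * ‖KPZ w compat S'‖
            ≤ (b γ * Real.exp (- b γ)) * A := by
          calc ‖w γ‖ * ‖KPZ w compat S'‖
              ≤ ‖w γ‖ * (Real.exp (a γ - b γ) * A) :=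
                mul_le_mul_of_nonneg_left habs' (norm_nonneg _)
            _ = (b γ * Real.exp (- b γ)) * A := by
                rw [hb]
                simp only []
                rw [show a γ - b γ = a γ + (- b γ) by ring, Real.exp_add]
                ring
        have hmain : A ≤ Zs + (b γ * Real.exp (- b γ)) * A := le_trans hA_le (by linarith)
        -- arithmetic: 1 - b e^{-b} ≥ e^{-b}
        have hexp1 : b γ + 1 ≤ Real.exp (b γ) := Real.add_one_le_exp (b γ)
        have hepos : 0 < Real.exp (- b γ) := Real.exp_pos _
        have hepos' : 0 < Real.exp (b γ) := Real.exp_pos _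
        have hee : Real.exp (- b γ) * Real.exp (b γ) = 1 := by
          rw [← Real.exp_add]; simp
        have hkey : b γ * Real.exp (- b γ) ≤ 1 - Real.exp (- b γ) := by
          nlinarith [hexp1, hepos, hee]
        have hfinal : Real.exp (- b γ) * A ≤ Zs := by nlinarith [hmain, hkey, hA0]
        have hAZ : A ≤ Real.exp (b γ) * Zs := by
          have := mul_le_mul_of_nonneg_left hfinal hepos'.le
          calc A = Real.exp (b γ) * (Real.exp (- b γ) * A) := by
                rw [← mul_assoc, mul_comm (Real.exp (b γ)), hee, one_mul]
            _ ≤ Real.exp (b γ) * Zs := mul_le_mul_of_nonneg_left hfinal hepos'.le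
        constructor
        · intro h0
          have hTne : KPZ w compat T ≠ 0 := (IH T (le_of_eq hTcard)).1
          have : Zs = 0 := by rw [hZs, h0]; simp
          have hA0' : A ≤ 0 := by nlinarith [hfinal, hepos, this]
          have : A = 0 := le_antisymm hA0' hA0
          exact hTne (by rwa [hA, norm_eq_zero] at this)
        · exact hAZ
      obtain ⟨γ0, hγ0⟩ := hne
      exact ⟨(key γ0 hγ0).1, fun γ hγ => (key γ hγ).2⟩

/-- Kotecký–Preiss zero-freeness: if a finite abstract polymer model (C, w, ∼)
admits a function a : C → ℝ≥0 with ∑_{γ* ≁ γ} |w_{γ*}| e^{a(γ*)} ≤ a(γ) for every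
polymer γ, then the polymer partition function is nonzero. -/
theorem polymer_partition_function_ne_zero (C : Type*) [Fintype C]
    (w : C → ℂ) (compat : C → C → Prop) (hsym : Symmetric compat)
    (hrefl : ∀ γ, ¬ compat γ γ) (a : C → ℝ) (ha : ∀ γ, 0 ≤ a γ)
    (hKP : ∀ γ : C,
      ∑ γ' ∈ Finset.univ.filter (fun γ' => ¬ compat γ' γ),
        ‖w γ'‖ * Real.exp (a γ') ≤ a γ) :
    ∑ Γ ∈ Finset.univ.filter
        (fun Γ : Finset C => ∀ γ ∈ Γ, ∀ γ' ∈ Γ, γ ≠ γ' → compat γ γ'),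
      ∏ γ ∈ Γ, w γ ≠ 0 := by
  have h := (KP_main w compat hsym hrefl a ha hKP (Finset.univ : Finset C).card
    Finset.univ le_rfl).1
  rw [KPZ, Finset.powerset_univ] at h
  exact h
end
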